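/- arXiv:1809.00803 — 3 statements merged into one kernel-verified Lean document; each statement's English description precedes it below -/
import Mathlib

section
/- Let $\{A_n\}$ and $\{B_n\}$ be sequences of real random variables on a common probability space such that: (1) $\mathbf{E}A_n = \mathbf{E}[A_n B_n] = 0$ for each $n$; (2) there is $c>0$ with $\mathbf{E}[A_n^2] \ge c$ for each $n$; (3) there are constants $C>0$ and $p>2$ with $\mathbf{E}|A_n|^p \le C$ and $\mathbf{E}[B_n^2] \le C$ for each $n$. Then $A_n + B_n$ does not converge in probability to $0$. -/
open MeasureTheory Filter Topology

/-!
Suppose `A n + B n → 0` in probability. Since `E[A B] = 0`, we have `E[A²] = E[A (A + B)]`.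
Off the event `E = {|A + B| ≥ η}` the integrand is at most `η |A|`, which contributes at most
`η ‖A‖_p ≤ c / 4` once `η` is small. On `E`, Cauchy–Schwarz bounds the contribution by
`S + √S ‖B‖₂` with `S = ∫_E A²`, and Hölder with exponent `p / 2 > 1` gives
`S ≤ ‖A‖_p² μ(E)^(1 - 2/p) → 0`: the bounded `p`-th moment makes `A²` uniformly integrable.
Hence `c ≤ c / 4 + o(1)`, a contradiction.
-/

section Moments

variable {Ω : Type*} [MeasurableSpace Ω] {μ : Measure Ω} {f g : Ω → ℝ} {p : ℝ}

lemma memLp_ofReal_of_integrable_abs_rpow (hf : AEStronglyMeasurable f μ) (hp : 0 < p)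
    (h : Integrable (fun x => |f x| ^ p) μ) : MemLp f (ENNReal.ofReal p) μ :=
  (integrable_norm_rpow_iff hf (by simpa using hp) ENNReal.ofReal_ne_top).1
    (by simpa [ENNReal.toReal_ofReal hp.le] using h)

lemma integral_abs_le_rpow_moment [IsProbabilityMeasure μ] (hp : 1 < p)
    (hf : MemLp f (ENNReal.ofReal p) μ) :
    ∫ x, |f x| ∂μ ≤ (∫ x, |f x| ^ p ∂μ) ^ (1 / p) := by
  simpa [Real.norm_eq_abs] using integral_mul_norm_le_Lp_mul_Lq
    (Real.HolderConjugate.conjExponent hp) hf (memLp_const (1 : ℝ))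

lemma setIntegral_sq_le_moment_mul_measureReal_rpow [IsFiniteMeasure μ] (hp : 2 < p)
    (hf : MemLp f (ENNReal.ofReal p) μ) (s : Set Ω) :
    ∫ x in s, f x ^ 2 ∂μ ≤ (∫ x, |f x| ^ p ∂μ) ^ (2 / p) * μ.real s ^ ((p - 2) / p) := by
  have hpq : (p / 2).HolderConjugate (p / (p - 2)) :=
    (Real.holderConjugate_iff_eq_conjExponent (by linarith)).2 (by field_simp)
  have hf2 : MemLp (fun x => f x ^ 2) (ENNReal.ofReal (p / 2)) μ := by
    have := hf.norm_rpow_div 2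
    rw [ENNReal.ofReal_div_of_pos two_pos, ENNReal.ofReal_ofNat]
    simpa [Real.norm_eq_abs] using this
  have H := integral_mul_norm_le_Lp_mul_Lq hpq (hf2.restrict s) (memLp_const (1 : ℝ))
  have hpow : ∀ x, ‖f x ^ 2‖ ^ (p / 2) = |f x| ^ p := fun x => by
    rw [Real.norm_eq_abs, abs_pow, ← Real.rpow_natCast, ← Real.rpow_mul (abs_nonneg _)]
    norm_num [mul_div_cancel₀]
  simp only [hpow] at H
  simp only [norm_pow, Real.norm_eq_abs, sq_abs, norm_one, mul_one, Real.one_rpow,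
    setIntegral_const, smul_eq_mul, one_div_div] at H
  refine H.trans (mul_le_mul_of_nonneg_right ?_ (by positivity))
  have hint : Integrable (fun x => |f x| ^ p) μ := by
    simpa [Real.norm_eq_abs, ENNReal.toReal_ofReal (by linarith : 0 ≤ p)]
      using hf.integrable_norm_rpow'
  exact Real.rpow_le_rpow (setIntegral_nonneg_of_ae (.of_forall fun x => by positivity))
    (setIntegral_le_integral hint (.of_forall fun x => by positivity)) (by positivity)

lemma tendsto_setIntegral_sq_of_moment_le [IsFiniteMeasure μ] {ι : Type*} {l : Filter ι}
    {f : ι → Ω → ℝ} {s : ι → Set Ω} {C : ℝ} (hp : 2 < p)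
    (hf : ∀ i, MemLp (f i) (ENNReal.ofReal p) μ) (hC : ∀ i, ∫ x, |f i x| ^ p ∂μ ≤ C)
    (hs : Tendsto (fun i => μ (s i)) l (𝓝 0)) :
    Tendsto (fun i => ∫ x in s i, f i x ^ 2 ∂μ) l (𝓝 0) := by
  have hreal : Tendsto (fun i => μ.real (s i) ^ ((p - 2) / p)) l (𝓝 0) := by
    have hr : 0 < (p - 2) / p := div_pos (by linarith) (by linarith)
    have := ((ENNReal.tendsto_toReal ENNReal.zero_ne_top).comp hs).rpow_const (.inr hr.le)
    simpa [measureReal_def, Real.zero_rpow hr.ne'] using this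
  refine squeeze_zero (fun i => setIntegral_nonneg_of_ae (.of_forall fun x => sq_nonneg _))
    (fun i => (setIntegral_sq_le_moment_mul_measureReal_rpow hp (hf i) (s i)).trans ?_)
    (by simpa using hreal.const_mul (C ^ (2 / p)))
  exact mul_le_mul_of_nonneg_right
    (Real.rpow_le_rpow (integral_nonneg fun x => by positivity) (hC i) (by positivity))
    (by positivity)

lemma setIntegral_mul_le_sqrt (hf : MemLp f 2 μ) (hg : MemLp g 2 μ) (s : Set Ω) :
    ∫ x in s, f x * g x ∂μ ≤ √(∫ x in s, f x ^ 2 ∂μ) * √(∫ x, g x ^ 2 ∂μ) := by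
  have hf' : MemLp f (ENNReal.ofReal 2) (μ.restrict s) := by simpa using hf.restrict s
  have hg' : MemLp g (ENNReal.ofReal 2) (μ.restrict s) := by simpa using hg.restrict s
  have H := integral_mul_norm_le_Lp_mul_Lq Real.HolderConjugate.two_two hf' hg'
  simp only [Real.norm_eq_abs, Real.rpow_two, sq_abs, ← Real.sqrt_eq_rpow] at H
  have hfg : Integrable (fun x => f x * g x) μ := hf.integrable_mul hg
  calc ∫ x in s, f x * g x ∂μ ≤ ∫ x in s, |f x| * |g x| ∂μ :=
        setIntegral_mono hfg.integrableOn (by simpa [abs_mul] using hfg.abs.integrableOn)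
          fun x => by rw [← abs_mul]; exact le_abs_self _
    _ ≤ √(∫ x in s, f x ^ 2 ∂μ) * √(∫ x in s, g x ^ 2 ∂μ) := H
    _ ≤ √(∫ x in s, f x ^ 2 ∂μ) * √(∫ x, g x ^ 2 ∂μ) :=
        mul_le_mul_of_nonneg_left (Real.sqrt_le_sqrt (setIntegral_le_integral hg.integrable_sq
          (ae_of_all _ fun x => sq_nonneg _))) (Real.sqrt_nonneg _)

lemma integral_sq_le_of_integral_mul_eq_zero [IsFiniteMeasure μ] (hf : MemLp f 2 μ)
    (hg : MemLp g 2 μ) (hfg : ∫ x, f x * g x ∂μ = 0) {s : Set Ω} (hs : MeasurableSet s)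
    {η : ℝ} (hη : 0 ≤ η) (hsc : ∀ x ∉ s, |f x + g x| ≤ η) :
    ∫ x, f x ^ 2 ∂μ ≤ η * ∫ x, |f x| ∂μ + ∫ x in s, f x ^ 2 ∂μ
      + √(∫ x in s, f x ^ 2 ∂μ) * √(∫ x, g x ^ 2 ∂μ) := by
  have hf2 : Integrable (fun x => f x ^ 2) μ := hf.integrable_sq
  have hfg' : Integrable (fun x => f x * g x) μ := hf.integrable_mul hg
  have hηf : Integrable (fun x => η * |f x|) μ := (hf.integrable one_le_two).abs.const_mul η
  have hexpand : ∀ x, f x * (f x + g x) = f x ^ 2 + f x * g x := fun x => by ring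
  have hsum : Integrable (fun x => f x * (f x + g x)) μ := by
    simp only [hexpand]; exact hf2.add hfg'
  have h_on : ∫ x in s, f x * (f x + g x) ∂μ
      ≤ ∫ x in s, f x ^ 2 ∂μ + √(∫ x in s, f x ^ 2 ∂μ) * √(∫ x, g x ^ 2 ∂μ) := by
    simp only [hexpand]
    rw [integral_add hf2.integrableOn hfg'.integrableOn]
    exact add_le_add_right (setIntegral_mul_le_sqrt hf hg s) _
  have h_off : ∫ x in sᶜ, f x * (f x + g x) ∂μ ≤ η * ∫ x, |f x| ∂μ := by
    calc ∫ x in sᶜ, f x * (f x + g x) ∂μ ≤ ∫ x in sᶜ, η * |f x| ∂μ := by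
          refine setIntegral_mono_on hsum.integrableOn hηf.integrableOn hs.compl fun x hx => ?_
          calc f x * (f x + g x) ≤ |f x| * |f x + g x| := by rw [← abs_mul]; exact le_abs_self _
            _ ≤ |f x| * η := by gcongr; exact hsc x hx
            _ = η * |f x| := mul_comm _ _
      _ ≤ ∫ x, η * |f x| ∂μ := setIntegral_le_integral hηf (ae_of_all _ fun x => by positivity)
      _ = η * ∫ x, |f x| ∂μ := integral_const_mul η _
  calc ∫ x, f x ^ 2 ∂μ = ∫ x, f x * (f x + g x) ∂μ := by
        simp only [hexpand]; rw [integral_add hf2 hfg', hfg, add_zero]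
    _ = ∫ x in s, f x * (f x + g x) ∂μ + ∫ x in sᶜ, f x * (f x + g x) ∂μ :=
        (integral_add_compl hs hsum).symm
    _ ≤ _ := by linarith

end Moments

theorem no_convergence_in_probability_general
    {Ω : Type*} [MeasurableSpace Ω] (μ : Measure Ω) [IsProbabilityMeasure μ]
    (A B : ℕ → Ω → ℝ)
    (c C p : ℝ) (hc : 0 < c) (hp : 2 < p)
    (hAmeas : ∀ n, Measurable (A n)) (hBmeas : ∀ n, Measurable (B n))
    (hApint : ∀ n, Integrable (fun ω => |A n ω| ^ p) μ)
    (hB2int : ∀ n, Integrable (fun ω => (B n ω) ^ 2) μ)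
    (hAB : ∀ n, ∫ ω, A n ω * B n ω ∂μ = 0)
    (hA2 : ∀ n, c ≤ ∫ ω, (A n ω) ^ 2 ∂μ)
    (hAp : ∀ n, ∫ ω, |A n ω| ^ p ∂μ ≤ C)
    (hB2 : ∀ n, ∫ ω, (B n ω) ^ 2 ∂μ ≤ C) :
    ¬ (∀ η : ℝ, 0 < η →
        Tendsto (fun n => μ {ω | η ≤ |A n ω + B n ω|}) atTop (nhds 0)) := by
  intro h
  have hApLp : ∀ n, MemLp (A n) (ENNReal.ofReal p) μ := fun n =>
    memLp_ofReal_of_integrable_abs_rpow (hAmeas n).aestronglyMeasurable (by linarith) (hApint n)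
  have hA2Lp : ∀ n, MemLp (A n) 2 μ := fun n => by
    simpa using (hApLp n).mono_exponent (ENNReal.ofReal_le_ofReal hp.le)
  have hB2Lp : ∀ n, MemLp (B n) 2 μ := fun n =>
    (memLp_two_iff_integrable_sq (hBmeas n).aestronglyMeasurable).2 (hB2int n)
  obtain ⟨η, hη, hηc⟩ := exists_pos_mul_lt (by linarith : 0 < c / 4) (C ^ (1 / p))
  set S : ℕ → ℝ := fun n => ∫ ω in {ω | η ≤ |A n ω + B n ω|}, A n ω ^ 2 ∂μ
  have hS : Tendsto S atTop (𝓝 0) := tendsto_setIntegral_sq_of_moment_le hp hApLp hAp (h η hη)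
  have hlow : ∀ n, 3 * c / 4 ≤ S n + √(S n) * √C := fun n => by
    have hsplit := integral_sq_le_of_integral_mul_eq_zero (hA2Lp n) (hB2Lp n) (hAB n)
      (s := {ω | η ≤ |A n ω + B n ω|})
      (measurableSet_le measurable_const ((hAmeas n).add (hBmeas n)).abs) hη.le
      fun ω hω => (not_le.1 hω).le
    have hL1 : ∫ ω, |A n ω| ∂μ ≤ C ^ (1 / p) :=
      (integral_abs_le_rpow_moment (by linarith) (hApLp n)).trans
        (Real.rpow_le_rpow (integral_nonneg fun ω => by positivity) (hAp n) (by positivity))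
    have hcross : √(S n) * √(∫ ω, B n ω ^ 2 ∂μ) ≤ √(S n) * √C :=
      mul_le_mul_of_nonneg_left (Real.sqrt_le_sqrt (hB2 n)) (Real.sqrt_nonneg _)
    linarith [hA2 n, mul_le_mul_of_nonneg_left hL1 hη.le]
  have hlim : Tendsto (fun n => S n + √(S n) * √C) atTop (𝓝 0) := by
    simpa using hS.add (hS.sqrt.mul_const √C)
  linarith [ge_of_tendsto' hlim hlow]

/-- If `A n` has mean zero, is uncorrelated with `B n`, has second moment
bounded below and `p`-th moment (`p > 2`) bounded above, and `B n` has bounded second moment,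
then `A n + B n` does not converge to `0` in probability. -/
theorem no_convergence_in_probability
    {Ω : Type*} [MeasurableSpace Ω] (μ : Measure Ω) [IsProbabilityMeasure μ]
    (A B : ℕ → Ω → ℝ)
    (c C p : ℝ) (hc : 0 < c) (hC : 0 < C) (hp : 2 < p)
    (hAmeas : ∀ n, Measurable (A n)) (hBmeas : ∀ n, Measurable (B n))
    (hAint : ∀ n, Integrable (A n) μ)
    (hABint : ∀ n, Integrable (fun ω => A n ω * B n ω) μ)
    (hApint : ∀ n, Integrable (fun ω => |A n ω| ^ p) μ)
    (hB2int : ∀ n, Integrable (fun ω => (B n ω) ^ 2) μ)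
    (hAmean : ∀ n, ∫ ω, A n ω ∂μ = 0)
    (hAB : ∀ n, ∫ ω, A n ω * B n ω ∂μ = 0)
    (hA2 : ∀ n, c ≤ ∫ ω, (A n ω) ^ 2 ∂μ)
    (hAp : ∀ n, ∫ ω, |A n ω| ^ p ∂μ ≤ C)
    (hB2 : ∀ n, ∫ ω, (B n ω) ^ 2 ∂μ ≤ C) :
    ¬ (∀ η : ℝ, 0 < η →
        Tendsto (fun n => μ {ω | η ≤ |A n ω + B n ω|}) atTop (nhds 0)) :=
  no_convergence_in_probability_general μ A B c C p hc hp hAmeas hBmeas hApint hB2int hAB hA2 hAp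
    hB2
end

section
/- There is a constant $C$ such that for all $t > 0$ and all $x \in \mathbf{R}^2$, the periodic heat kernel $p_t(x) = \frac{1}{2\pi t}\sum_{z \in \mathbf{Z}^2} e^{-|x+z|^2/(2t)}$ satisfies $p_t(x) \le C(1 + t^{-1}) e^{-|x|_{\mathbf{T}^2}^2/(2t)}$, where $|x|_{\mathbf{T}^2} = \min_{y \in \mathbf{Z}^2} |x + y|$ is the distance on the torus from the origin. -/
open Real

/-- The plane `ℝ²` with the Euclidean norm. -/
local notation "E2" => EuclideanSpace ℝ (Fin 2)

/-- Embedding of `ℤ²` into `ℝ²`. -/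
noncomputable def latticePt (n : Fin 2 → ℤ) : EuclideanSpace ℝ (Fin 2) :=
  WithLp.toLp 2 (fun i => (n i : ℝ))

/-- Distance from the origin on the torus `ℝ²/ℤ²`:
`|x|_{T²} = min_{y ∈ ℤ²} |x + y|`. -/
noncomputable def torusNorm (x : EuclideanSpace ℝ (Fin 2)) : ℝ :=
  ⨅ n : Fin 2 → ℤ, ‖x + latticePt n‖

/-- The periodic heat kernel on the two-dimensional torus:
`p_t(x) = (2πt)⁻¹ ∑_{z ∈ ℤ²} exp(-|x+z|²/(2t))`. -/
noncomputable def periodicHeatKernel (t : ℝ) (x : EuclideanSpace ℝ (Fin 2)) : ℝ :=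
  (1 / (2 * π * t)) * ∑' n : Fin 2 → ℤ, Real.exp (-‖x + latticePt n‖ ^ 2 / (2 * t))

/-!
Rounding each coordinate shows that the torus norm of `x` is the norm of `y = x - round x`, whose
coordinates satisfy `|yᵢ| ≤ 1/2`; by periodicity the kernel at `x` equals the kernel at `y`, and
there it factors into two one-dimensional sums `∑ₙ exp(-(s + n)² / 2t)` with `s = yᵢ`. For
`|s| ≤ 1/2` each term is at most `exp(-s² / 2t)` times one of the three neighbouring terms of
`∑ₙ exp(-n² / 2t) = θ(1/(2πt))`, and the Poisson summation formula `θ(a) = a^(-1/2) θ(1/a)`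
gives `θ(a)² ≤ θ(1)² (1 + 1/a)`.
-/

-- `theta a = jacobiTheta (a * I)`, the theta function on the imaginary axis.
noncomputable def theta (a : ℝ) : ℝ :=
  ∑' n : ℤ, exp (-π * a * n ^ 2)

section Theta

variable {a b : ℝ}

lemma summable_exp_neg_pi_mul_int_sq (ha : 0 < a) :
    Summable fun n : ℤ => exp (-π * a * n ^ 2) := by
  simpa [mul_assoc] using summable_pow_mul_jacobiTheta₂_term_bound 0 ha 0

lemma theta_pos (ha : 0 < a) : 0 < theta a :=
  (summable_exp_neg_pi_mul_int_sq ha).tsum_pos (fun _ => (exp_pos _).le) 0 (exp_pos _)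

lemma theta_le_theta (ha : 0 < a) (hab : a ≤ b) : theta b ≤ theta a := by
  refine (summable_exp_neg_pi_mul_int_sq (ha.trans_le hab)).tsum_le_tsum (fun n => ?_)
    (summable_exp_neg_pi_mul_int_sq ha)
  have := mul_le_mul_of_nonneg_left (mul_le_mul_of_nonneg_right hab (sq_nonneg (n : ℝ))) pi_pos.le
  exact exp_le_exp.2 (by linarith)

lemma theta_eq_inv_sqrt_mul_theta_inv (ha : 0 < a) : theta a = (√a)⁻¹ * theta a⁻¹ := by
  simp_rw [theta, Real.tsum_exp_neg_mul_int_sq ha, sqrt_eq_rpow, one_div, div_eq_mul_inv]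

lemma theta_sq_le (ha : 0 < a) : theta a ^ 2 ≤ theta 1 ^ 2 * (1 + a⁻¹) := by
  have h1 := (theta_pos one_pos).le
  rcases le_total 1 a with h | h
  · have := theta_le_theta one_pos h
    have := (theta_pos ha).le
    nlinarith [inv_pos.2 ha]
  · have hle : theta a ≤ (√a)⁻¹ * theta 1 := by
      rw [theta_eq_inv_sqrt_mul_theta_inv ha]
      gcongr
      exact theta_le_theta one_pos (one_le_inv₀ ha |>.2 h)
    calc theta a ^ 2 ≤ ((√a)⁻¹ * theta 1) ^ 2 := pow_le_pow_left₀ (theta_pos ha).le hle 2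
      _ = theta 1 ^ 2 * a⁻¹ := by rw [mul_pow, inv_pow, sq_sqrt ha.le]; ring
      _ ≤ theta 1 ^ 2 * (1 + a⁻¹) := by gcongr; linarith

lemma inv_mul_theta_sq_le {t : ℝ} (ht : 0 < t) :
    (2 * π * t)⁻¹ * theta (2 * π * t)⁻¹ ^ 2 ≤ theta 1 ^ 2 * (1 + t⁻¹) := by
  have h2π : 1 ≤ 2 * π := by linarith [pi_gt_three]
  calc (2 * π * t)⁻¹ * theta (2 * π * t)⁻¹ ^ 2
      ≤ (2 * π * t)⁻¹ * (theta 1 ^ 2 * (1 + 2 * π * t)) := by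
        gcongr
        simpa using theta_sq_le (a := (2 * π * t)⁻¹) (by positivity)
    _ = theta 1 ^ 2 * (1 + (2 * π * t)⁻¹) := by field_simp; ring
    _ ≤ theta 1 ^ 2 * (1 + t⁻¹) := by
        gcongr
        nlinarith

end Theta

section Shift

variable {G : Type*} [AddGroup G] {g : G → ℝ}

lemma Summable.sum_add (hg : Summable g) (J : Finset G) :
    Summable fun n => ∑ j ∈ J, g (n + j) :=
  summable_sum fun j _ => (Equiv.addRight j).summable_iff.2 hg

lemma tsum_sum_add (hg : Summable g) (J : Finset G) :
    ∑' n, ∑ j ∈ J, g (n + j) = J.card * ∑' n, g n := by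
  rw [Summable.tsum_finsetSum (f := fun j n => g (n + j))
    fun j _ => (Equiv.addRight j).summable_iff.2 hg]
  have hshift (j : G) : ∑' n, g (n + j) = ∑' n, g n := (Equiv.addRight j).tsum_eq g
  simp only [hshift, Finset.sum_const, nsmul_eq_mul]

end Shift

noncomputable def periodicGaussian (t s : ℝ) : ℝ :=
  ∑' n : ℤ, exp (-(s + n) ^ 2 / (2 * t))

section PeriodicGaussian

variable {t s : ℝ}

lemma exists_mem_Icc_sq_add_sq_le (hs : |s| ≤ 1 / 2) (n : ℤ) :
    ∃ j ∈ Finset.Icc (-1 : ℤ) 1, s ^ 2 + ((n + j : ℤ) : ℝ) ^ 2 ≤ (s + n) ^ 2 := by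
  obtain ⟨hs₁, hs₂⟩ := abs_le.1 hs
  rcases lt_trichotomy n 0 with hn | rfl | hn
  · refine ⟨1, by simp, ?_⟩
    have : (n : ℝ) ≤ -1 := by exact_mod_cast Int.le_sub_one_of_lt hn
    push_cast
    nlinarith
  · exact ⟨0, by simp, by simp⟩
  · refine ⟨-1, by simp, ?_⟩
    have : (1 : ℝ) ≤ n := by exact_mod_cast hn
    push_cast
    nlinarith

lemma exp_neg_sq_add_int_le (ht : 0 < t) (hs : |s| ≤ 1 / 2) (n : ℤ) :
    exp (-(s + n) ^ 2 / (2 * t)) ≤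
      exp (-s ^ 2 / (2 * t)) *
        ∑ j ∈ Finset.Icc (-1 : ℤ) 1, exp (-((n + j : ℤ) : ℝ) ^ 2 / (2 * t)) := by
  obtain ⟨j, hj, hsq⟩ := exists_mem_Icc_sq_add_sq_le hs n
  calc exp (-(s + n) ^ 2 / (2 * t))
      ≤ exp (-s ^ 2 / (2 * t)) * exp (-((n + j : ℤ) : ℝ) ^ 2 / (2 * t)) := by
        rw [← exp_add, exp_le_exp, ← add_div]
        gcongr
        linarith
    _ ≤ _ := by
        gcongr
        exact Finset.single_le_sum (f := fun j => exp (-((n + j : ℤ) : ℝ) ^ 2 / (2 * t)))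
          (fun _ _ => (exp_pos _).le) hj

lemma exp_neg_sq_div_eq (ht : t ≠ 0) (r : ℝ) :
    exp (-r ^ 2 / (2 * t)) = exp (-π * (2 * π * t)⁻¹ * r ^ 2) := by
  congr 1
  field_simp

lemma summable_exp_neg_int_sq_div (ht : 0 < t) :
    Summable fun n : ℤ => exp (-(n : ℝ) ^ 2 / (2 * t)) := by
  simpa only [exp_neg_sq_div_eq ht.ne'] using summable_exp_neg_pi_mul_int_sq (by positivity)

lemma summable_periodicGaussian_term (ht : 0 < t) (hs : |s| ≤ 1 / 2) :
    Summable fun n : ℤ => exp (-(s + n) ^ 2 / (2 * t)) :=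
  .of_nonneg_of_le (fun _ => (exp_pos _).le) (exp_neg_sq_add_int_le ht hs)
    (((summable_exp_neg_int_sq_div ht).sum_add _).mul_left _)

lemma periodicGaussian_le (ht : 0 < t) (hs : |s| ≤ 1 / 2) :
    periodicGaussian t s ≤ 3 * theta (2 * π * t)⁻¹ * exp (-s ^ 2 / (2 * t)) := by
  have hsum := summable_exp_neg_int_sq_div ht
  calc periodicGaussian t s
      ≤ ∑' n : ℤ, exp (-s ^ 2 / (2 * t)) *
          ∑ j ∈ Finset.Icc (-1 : ℤ) 1, exp (-((n + j : ℤ) : ℝ) ^ 2 / (2 * t)) :=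
        (summable_periodicGaussian_term ht hs).tsum_le_tsum (exp_neg_sq_add_int_le ht hs)
          ((hsum.sum_add _).mul_left _)
    _ = 3 * theta (2 * π * t)⁻¹ * exp (-s ^ 2 / (2 * t)) := by
        have hcard : (Finset.Icc (-1 : ℤ) 1).card = 3 := rfl
        rw [tsum_mul_left, tsum_sum_add hsum, hcard, theta]
        simp only [exp_neg_sq_div_eq ht.ne', Nat.cast_ofNat]
        ring

end PeriodicGaussian

lemma tsum_fin_two_mul {α : Type*} {f g : α → ℝ} (hf : Summable f) (hg : Summable g)
    (hf₀ : ∀ a, 0 ≤ f a) (hg₀ : ∀ a, 0 ≤ g a) :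
    ∑' k : Fin 2 → α, f (k 0) * g (k 1) = (∑' a, f a) * ∑' a, g a := by
  rw [hf.tsum_mul_tsum hg (hf.mul_of_nonneg hg hf₀ hg₀),
    ← (piFinTwoEquiv fun _ => α).tsum_eq]
  rfl

lemma latticePt_add (m n : Fin 2 → ℤ) : latticePt (m + n) = latticePt m + latticePt n := by
  ext i
  simp [latticePt]

lemma latticePt_neg (n : Fin 2 → ℤ) : latticePt (-n) = -latticePt n := by
  ext i
  simp [latticePt]

lemma norm_sq_eq_fin_two (x : E2) : ‖x‖ ^ 2 = x 0 ^ 2 + x 1 ^ 2 := by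
  simp [EuclideanSpace.norm_sq_eq, Fin.sum_univ_two]

lemma norm_add_latticePt_sq (x : E2) (n : Fin 2 → ℤ) :
    ‖x + latticePt n‖ ^ 2 = (x 0 + n 0) ^ 2 + (x 1 + n 1) ^ 2 := by
  simp [norm_sq_eq_fin_two, latticePt]

lemma torusNorm_eq_norm_sub_round (x : E2) :
    torusNorm x = ‖x - latticePt fun i => round (x i)‖ := by
  rw [sub_eq_add_neg, ← latticePt_neg]
  refine le_antisymm (ciInf_le ⟨0, ?_⟩ _) (le_ciInf fun n => ?_)
  · rintro _ ⟨n, rfl⟩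
    exact norm_nonneg _
  rw [← pow_le_pow_iff_left₀ (norm_nonneg _) (norm_nonneg _) two_ne_zero,
    norm_add_latticePt_sq, norm_add_latticePt_sq]
  have hround (i : Fin 2) : (x i + ((-fun i => round (x i)) i : ℤ)) ^ 2 ≤ (x i + n i) ^ 2 := by
    simpa [sq_le_sq, ← sub_eq_add_neg] using round_le (x i) (-n i)
  exact add_le_add (hround 0) (hround 1)

lemma periodicHeatKernel_sub_latticePt (t : ℝ) (x : E2) (n : Fin 2 → ℤ) :
    periodicHeatKernel t (x - latticePt n) = periodicHeatKernel t x := by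
  unfold periodicHeatKernel
  rw [← (Equiv.addRight n).tsum_eq]
  simp [latticePt_add]

lemma periodicHeatKernel_eq_mul {t : ℝ} (ht : 0 < t) {x : E2} (hx : ∀ i, |x i| ≤ 1 / 2) :
    periodicHeatKernel t x =
      (2 * π * t)⁻¹ * (periodicGaussian t (x 0) * periodicGaussian t (x 1)) := by
  rw [periodicHeatKernel, periodicGaussian, periodicGaussian, one_div, ← tsum_fin_two_mul
    (summable_periodicGaussian_term ht (hx 0)) (summable_periodicGaussian_term ht (hx 1))
    (fun _ => (exp_pos _).le) (fun _ => (exp_pos _).le)]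
  simp only [norm_add_latticePt_sq, ← exp_add]
  congr! 4
  ring

/-- There is a constant `C` such that for all `t > 0` and all `x`,
`p_t(x) ≤ C (1 + t⁻¹) exp(-|x|²_{T²}/(2t))`. -/
theorem periodicHeatKernel_le :
    ∃ C : ℝ, 0 < C ∧ ∀ t : ℝ, 0 < t → ∀ x : EuclideanSpace ℝ (Fin 2),
      periodicHeatKernel t x ≤ C * (1 + t⁻¹) * Real.exp (-(torusNorm x) ^ 2 / (2 * t)) := by
  refine ⟨9 * theta 1 ^ 2, by have := theta_pos one_pos; positivity, fun t ht x => ?_⟩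
  set y := x - latticePt fun i => round (x i)
  have hy (i : Fin 2) : |y i| ≤ 1 / 2 := by simpa [y, latticePt] using abs_sub_round (x i)
  have hP (i : Fin 2) : 0 ≤ periodicGaussian t (y i) := tsum_nonneg fun _ => (exp_pos _).le
  rw [← periodicHeatKernel_sub_latticePt t x (fun i => round (x i)),
    periodicHeatKernel_eq_mul ht hy, torusNorm_eq_norm_sub_round, norm_sq_eq_fin_two]
  calc (2 * π * t)⁻¹ * (periodicGaussian t (y 0) * periodicGaussian t (y 1))
      ≤ (2 * π * t)⁻¹ * ((3 * theta (2 * π * t)⁻¹ * exp (-y 0 ^ 2 / (2 * t))) *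
          (3 * theta (2 * π * t)⁻¹ * exp (-y 1 ^ 2 / (2 * t)))) := by
        have hle (i : Fin 2) := periodicGaussian_le ht (hy i)
        gcongr
        exacts [hP 1, (hP 0).trans (hle 0), hle 0, hle 1]
    _ = 9 * ((2 * π * t)⁻¹ * theta (2 * π * t)⁻¹ ^ 2) *
          exp (-(y 0 ^ 2 + y 1 ^ 2) / (2 * t)) := by
        rw [mul_mul_mul_comm, ← exp_add, neg_add, add_div]
        ring
    _ ≤ 9 * theta 1 ^ 2 * (1 + t⁻¹) * exp (-(y 0 ^ 2 + y 1 ^ 2) / (2 * t)) := by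
        have := inv_mul_theta_sq_le ht
        gcongr ?_ * _
        linarith
end

section
/- Suppose $(G_r)_{r\ge 0}$ is a family of differentiable functions $G_r : [0,\theta_1] \to [0,\infty)$ satisfying $|G_r'(\theta)| \le C\,G_{r+1}(\theta)$ for all $r$ and $\theta$, and suppose in addition that there are constants $M > 0$ and $A > 0$ with $G_r(\theta) \le M A^r$ for all $r \ge 0$ and $\theta \in [0,\theta_1]$. Then for all $r \ge 0$ and $\theta \in [0, \theta_1]$, $G_r(\theta) \le \sum_{j=0}^{\infty} \frac{(C\theta)^j}{j!} G_{r+j}(0)$. -/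
/-!
For `C ≥ 0`, induction on `K` gives the finite bound
`G₀(x) ≤ ∑_{j<K} (C(x-a))^j/j! · G_j(a) + (C(x-a))^K/K! · B_K` whenever `G_n ≤ B_n`:
the right-hand side agrees with `G₀` at `a`, and its derivative is `C` times the majorant of the
shifted family `(G_{n+1})`, which by induction dominates `C · G₁ ≥ G₀'`; the comparison principle
concludes. With `B_K = M A^K` the remainder is `M (AC(x-a))^K/K! → 0`.
For `C < 0`, `|G_n'| ≤ C G_{n+1} ≤ 0` forces `G_{n+1} = 0` and `G₀` constant, so both sides equal
`G₀(a)`.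
-/

open Set Filter Topology Finset Nat

theorem hasDerivAt_pow_succ_div_factorial (C a x : ℝ) (n : ℕ) :
    HasDerivAt (fun y ↦ (C * (y - a)) ^ (n + 1) / (n + 1)! )
      (C * ((C * (x - a)) ^ n / n !)) x := by
  have hlin : HasDerivAt (fun y ↦ C * (y - a)) C x := by
    simpa using ((hasDerivAt_id x).sub_const a).const_mul C
  refine ((hlin.pow (n + 1)).div_const ((n + 1)! : ℝ)).congr_deriv ?_
  rw [factorial_succ]
  push_cast
  field_simp

theorem hasDerivAt_sum_range_succ_pow_div_factorial_mul (C a x : ℝ) (c : ℕ → ℝ) (K : ℕ) :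
    HasDerivAt (fun y ↦ ∑ j ∈ range (K + 1), (C * (y - a)) ^ j / j ! * c j)
      (C * ∑ j ∈ range K, (C * (x - a)) ^ j / j ! * c (j + 1)) x := by
  simp_rw [sum_range_succ' _ K, mul_sum]
  simp only [pow_zero, factorial_zero, cast_one, div_one, one_mul]
  refine (HasDerivAt.fun_sum fun j _ ↦ ?_).add_const _
  simpa [mul_assoc] using (hasDerivAt_pow_succ_div_factorial C a x j).mul_const (c (j + 1))

theorem summable_pow_div_factorial_mul_of_abs_le {t M A : ℝ} {c : ℕ → ℝ}
    (hc : ∀ j, |c j| ≤ M * A ^ j) : Summable fun j ↦ t ^ j / j ! * c j := by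
  refine .of_norm_bounded ((Real.summable_pow_div_factorial (|t| * A)).mul_left M) fun j ↦ ?_
  calc ‖t ^ j / j ! * c j‖ = |t| ^ j / j ! * |c j| := by simp
    _ ≤ |t| ^ j / j ! * (M * A ^ j) := by gcongr; exact hc j
    _ = M * ((|t| * A) ^ j / j !) := by ring

theorem tendsto_pow_div_factorial_mul_geometric (t M A : ℝ) :
    Tendsto (fun K ↦ t ^ K / K ! * (M * A ^ K)) atTop (𝓝 0) := by
  have := (FloorSemiring.tendsto_pow_div_factorial_atTop (t * A)).const_mul M
  rw [mul_zero] at this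
  exact this.congr fun K ↦ by rw [mul_pow]; ring

section

variable {a b C : ℝ} {G : ℕ → ℝ → ℝ}

theorem le_sum_pow_div_factorial_mul_add_remainder (hC : 0 ≤ C) {B : ℕ → ℝ}
    (hdiff : ∀ n, DifferentiableOn ℝ (G n) (Icc a b))
    (hderiv : ∀ n, ∀ x ∈ Ico a b, derivWithin (G n) (Icc a b) x ≤ C * G (n + 1) x)
    (hbound : ∀ n, ∀ x ∈ Icc a b, G n x ≤ B n) (K : ℕ) {x : ℝ} (hx : x ∈ Icc a b) :
    G 0 x ≤ ∑ j ∈ range K, (C * (x - a)) ^ j / j ! * G j a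
      + (C * (x - a)) ^ K / K ! * B K := by
  induction K generalizing G B x with
  | zero => simpa using hbound 0 x hx
  | succ K ih =>
    have hmajorant := fun y ↦
      (hasDerivAt_sum_range_succ_pow_div_factorial_mul C a y (fun j ↦ G j a) K).add
        ((hasDerivAt_pow_succ_div_factorial C a y K).mul_const (B (K + 1)))
    refine image_le_of_deriv_right_le_deriv_boundary (hdiff 0).continuousOn
      (fun y hy ↦ (hdiff 0 y (Ico_subset_Icc_self hy)).hasDerivWithinAt.mono_of_mem_nhdsWithin
        (Icc_mem_nhdsGE_of_mem hy)) ?_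
      (HasDerivAt.continuousOn fun y _ ↦ hmajorant y) (fun y _ ↦ (hmajorant y).hasDerivWithinAt)
      (fun y hy ↦ ?_) hx
    · simp [sum_range_succ', zero_pow]
    · have := ih (G := fun n ↦ G (n + 1)) (B := fun n ↦ B (n + 1)) (fun n ↦ hdiff (n + 1))
        (fun n ↦ hderiv (n + 1)) (fun n ↦ hbound (n + 1)) (Ico_subset_Icc_self hy)
      calc derivWithin (G 0) (Icc a b) y ≤ C * G 1 y := hderiv 0 y hy
        _ ≤ _ := by
          rw [mul_assoc, ← mul_add]
          exact mul_le_mul_of_nonneg_left this hC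

theorem le_tsum_pow_div_factorial_mul {M A : ℝ} (hC : 0 ≤ C)
    (hdiff : ∀ n, DifferentiableOn ℝ (G n) (Icc a b))
    (hderiv : ∀ n, ∀ x ∈ Ico a b, derivWithin (G n) (Icc a b) x ≤ C * G (n + 1) x)
    (hbound : ∀ n, ∀ x ∈ Icc a b, |G n x| ≤ M * A ^ n) {x : ℝ} (hx : x ∈ Icc a b) :
    G 0 x ≤ ∑' j, (C * (x - a)) ^ j / j ! * G j a := by
  have ha : a ∈ Icc a b := left_mem_Icc.2 (hx.1.trans hx.2)
  have hsum := (summable_pow_div_factorial_mul_of_abs_le (t := C * (x - a))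
    fun j ↦ hbound j a ha).hasSum
  have hpartial := hsum.tendsto_sum_nat.add
    (tendsto_pow_div_factorial_mul_geometric (C * (x - a)) M A)
  rw [add_zero] at hpartial
  refine ge_of_tendsto' hpartial fun K ↦ ?_
  exact le_sum_pow_div_factorial_mul_add_remainder hC hdiff hderiv
    (fun n y hy ↦ (le_abs_self _).trans (hbound n y hy)) K hx

theorem eq_tsum_pow_div_factorial_mul_of_neg (hC : C < 0)
    (hnonneg : ∀ n, ∀ x ∈ Icc a b, 0 ≤ G n x)
    (hdiff : DifferentiableOn ℝ (G 0) (Icc a b))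
    (hderiv : ∀ n, ∀ x ∈ Icc a b, |derivWithin (G n) (Icc a b) x| ≤ C * G (n + 1) x)
    {x : ℝ} (hx : x ∈ Icc a b) :
    G 0 x = ∑' j, (C * (x - a)) ^ j / j ! * G j a := by
  have hzero : ∀ n, ∀ y ∈ Icc a b, G (n + 1) y = 0 := fun n y hy ↦
    le_antisymm (nonpos_of_mul_nonneg_right ((abs_nonneg _).trans (hderiv n y hy)) hC)
      (hnonneg (n + 1) y hy)
  have ha : a ∈ Icc a b := left_mem_Icc.2 (hx.1.trans hx.2)
  rw [tsum_eq_single 0 fun j hj ↦ ?_]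
  · refine (constant_of_derivWithin_zero hdiff (fun y hy ↦ ?_) x hx).trans (by simp)
    have := hderiv 0 y (Ico_subset_Icc_self hy)
    rwa [hzero 0 y (Ico_subset_Icc_self hy), mul_zero, abs_nonpos_iff] at this
  · obtain ⟨n, rfl⟩ := exists_eq_succ_of_ne_zero hj
    rw [hzero n a ha, mul_zero]

end

theorem taylor_series_inequality_general
    (θ₁ C : ℝ)
    (G : ℕ → ℝ → ℝ)
    (hnonneg : ∀ r, ∀ θ ∈ Icc (0 : ℝ) θ₁, 0 ≤ G r θ)
    (hdiff : ∀ r, DifferentiableOn ℝ (G r) (Icc (0 : ℝ) θ₁))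
    (hderiv : ∀ r, ∀ θ ∈ Icc (0 : ℝ) θ₁,
      |derivWithin (G r) (Icc (0 : ℝ) θ₁) θ| ≤ C * G (r + 1) θ)
    (M A : ℝ)
    (hbound : ∀ r, ∀ θ ∈ Icc (0 : ℝ) θ₁, G r θ ≤ M * A ^ r)
    (r : ℕ) (θ : ℝ) (hθ : θ ∈ Icc (0 : ℝ) θ₁) :
    G r θ ≤ ∑' j : ℕ, (C * θ) ^ j / (j.factorial : ℝ) * G (r + j) 0 := by
  have hshift : ∀ n, ∀ y ∈ Icc (0 : ℝ) θ₁, |G (r + n) y| ≤ M * A ^ r * A ^ n := by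
    intro n y hy
    rw [mul_assoc, ← pow_add, abs_of_nonneg (hnonneg _ y hy)]
    exact hbound _ y hy
  rcases le_or_gt 0 C with hC | hC
  · simpa using le_tsum_pow_div_factorial_mul (G := fun n ↦ G (r + n)) hC
      (fun n ↦ hdiff (r + n))
      (fun n y hy ↦ (le_abs_self _).trans (hderiv (r + n) y (Ico_subset_Icc_self hy))) hshift hθ
  · simpa using (eq_tsum_pow_div_factorial_mul_of_neg (G := fun n ↦ G (r + n)) hC
      (fun n ↦ hnonneg (r + n)) (hdiff r) (fun n ↦ hderiv (r + n)) hθ).le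

/-- If `(G_r)` are nonnegative differentiable functions on `[0,θ₁]` with
`|G_r'| ≤ C G_{r+1}` and a uniform bound `G_r(θ) ≤ M A^r`, then
`G_r(θ) ≤ ∑_{j=0}^∞ (Cθ)^j/j! · G_{r+j}(0)`. -/
theorem taylor_series_inequality
    (θ₁ C : ℝ) (hθ₁ : 0 ≤ θ₁)
    (G : ℕ → ℝ → ℝ)
    (hnonneg : ∀ r, ∀ θ ∈ Icc (0 : ℝ) θ₁, 0 ≤ G r θ)
    (hdiff : ∀ r, DifferentiableOn ℝ (G r) (Icc (0 : ℝ) θ₁))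
    (hderiv : ∀ r, ∀ θ ∈ Icc (0 : ℝ) θ₁,
      |derivWithin (G r) (Icc (0 : ℝ) θ₁) θ| ≤ C * G (r + 1) θ)
    (M A : ℝ) (hM : 0 < M) (hA : 0 < A)
    (hbound : ∀ r, ∀ θ ∈ Icc (0 : ℝ) θ₁, G r θ ≤ M * A ^ r)
    (r : ℕ) (θ : ℝ) (hθ : θ ∈ Icc (0 : ℝ) θ₁) :
    G r θ ≤ ∑' j : ℕ, (C * θ) ^ j / (j.factorial : ℝ) * G (r + j) 0 :=
  taylor_series_inequality_general θ₁ C G hnonneg hdiff hderiv M A hbound r θ hθ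
end
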